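/- For all integers n ≥ 1, c ≥ 1 and a, b ≥ 0, H*_n({2}^a,1,{2}^b,1,{2}^c) = -2·∑_{k=1}^{n} (-1)^k·C(n,k)/(k^{2(a+b+c)+2}·C(n+k,k)) - 4·∑_{k=1}^{n} H_{k-1}(-2c)·C(n,k)/(k^{2a+2b+2}·C(n+k,k)) - 4·∑_{k=1}^{n} H_{k-1}(-(2b+1+2c))·C(n,k)/(k^{2a+1}·C(n+k,k)) - 8·∑_{k=1}^{n} H_{k-1}(2b+1, -2c)·C(n,k)/(k^{2a+1}·C(n+k,k)). -/

import Mathlib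

/-!
With `r n k = C(n,k) / C(n+k,k)`, each star sum in question has the form
`H*_n(l) = ∑_{k=1}^n φ(k) r(n,k)` for all `n ≥ 1`. The empty list starts this with
`φ(k) = -2 (-1)^k`, since `∑_{k=1}^n (-1)^k r(n,k) = -1/2`. Prepending a `2` replaces `φ(k)`
by `φ(k)/k²`, because `∑_{m=k}^n r(m,k)/m² = r(n,k)/k²` telescopes; prepending a `1` replaces
it by `(φ(k) + 2 ∑_{j<k} φ(j))/k`, because
`∑_{m=k}^n r(m,k)/m = r(n,k)/k + 2 ∑_{m=k+1}^n r(n,m)/m`.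
Reading the list from the right and evaluating the partial sums of `φ` as alternating
harmonic sums gives the formula.
-/

open Finset

/-- Sign factor for an alternating multiple harmonic sum entry. -/
def aSgn (s : ℤ) : ℚ := if 0 < s then 1 else -1

/-- Alternating multiple harmonic sum `H_n(s₁,…,s_ℓ)` (strict indices). -/
def Hh : ℕ → List ℤ → ℚ
  | _, [] => 1
  | n, s :: r => ∑ k ∈ Finset.Icc 1 n, aSgn s ^ k / (k : ℚ) ^ s.natAbs * Hh (k - 1) r

/-- Alternating multiple harmonic star sum `H*_n(s₁,…,s_ℓ)` (weak indices). -/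
def Hstar : ℕ → List ℤ → ℚ
  | _, [] => 1
  | n, s :: r => ∑ k ∈ Finset.Icc 1 n, aSgn s ^ k / (k : ℚ) ^ s.natAbs * Hstar k r

/-- All compositions (ordered tuples of positive integers) of `w`. -/
def comps : ℕ → List (List ℕ)
  | 0 => [[]]
  | (w+1) => (List.range (w+1)).flatMap (fun j => (comps (w - j)).map (fun l => (j+1) :: l))
decreasing_by simp_wf <;> omega

/-- Coerce a list of naturals to a list of integers. -/
def natList (l : List ℕ) : List ℤ := l.map (fun m => (m : ℤ))

def binomRatio (n k : ℕ) : ℚ := n.choose k / (n + k).choose k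

lemma Nat.cast_choose_succ_right_mul {R : Type*} [CommRing R] (n k : ℕ) :
    (n.choose (k + 1) : R) * (k + 1) = n.choose k * (n - k) := by
  rcases le_or_gt k n with h | h
  · have := congrArg (Nat.cast : ℕ → R) (Nat.choose_succ_right_eq n k)
    push_cast [Nat.cast_sub h] at this
    exact this
  · simp [Nat.choose_eq_zero_of_lt h, Nat.choose_eq_zero_of_lt (h.trans (Nat.lt_succ_self k))]

lemma Nat.cast_succ_choose_mul {R : Type*} [CommRing R] (n k : ℕ) :
    ((n + 1).choose k : R) * (n + 1 - k) = n.choose k * (n + 1) := by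
  rcases le_or_gt k (n + 1) with h | h
  · have := congrArg (Nat.cast : ℕ → R) (Nat.choose_mul_succ_eq n k)
    push_cast [Nat.cast_sub h] at this
    exact this.symm
  · simp [Nat.choose_eq_zero_of_lt h, Nat.choose_eq_zero_of_lt (Nat.lt_of_succ_lt h)]

lemma Nat.cast_add_choose_ne_zero {R : Type*} [AddMonoidWithOne R] [CharZero R] (n k : ℕ) :
    ((n + k).choose k : R) ≠ 0 :=
  Nat.cast_ne_zero.mpr (Nat.choose_pos (Nat.le_add_left k n)).ne'

lemma binomRatio_of_lt {n k : ℕ} (h : n < k) : binomRatio n k = 0 := by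
  simp [binomRatio, Nat.choose_eq_zero_of_lt h]

lemma binomRatio_succ_right (n k : ℕ) :
    ((n : ℚ) + k + 1) * binomRatio n (k + 1) = (n - k) * binomRatio n k := by
  have hnum := Nat.cast_choose_succ_right_mul (R := ℚ) n k
  have hden : ((n + k + 1).choose (k + 1) : ℚ) * (k + 1) = (n + k + 1) * (n + k).choose k := by
    exact_mod_cast (Nat.add_one_mul_choose_eq (n + k) k).symm
  have h1 := Nat.cast_add_choose_ne_zero (R := ℚ) n (k + 1)
  have h2 := Nat.cast_add_choose_ne_zero (R := ℚ) n k
  rw [← add_assoc] at h1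
  unfold binomRatio
  rw [← add_assoc, mul_div_assoc', mul_div_assoc', div_eq_div_iff h1 h2]
  apply mul_left_cancel₀ (show ((k : ℚ) + 1) ≠ 0 by positivity)
  linear_combination
    ((n + k + 1 : ℚ) * (n + k).choose k) * hnum - ((n - k : ℚ) * n.choose k) * hden

lemma binomRatio_succ_left (n k : ℕ) :
    (((n : ℚ) + 1) ^ 2 - k ^ 2) * binomRatio (n + 1) k =
      ((n : ℚ) + 1) ^ 2 * binomRatio n k := by
  have hnum := Nat.cast_succ_choose_mul (R := ℚ) n k
  have hden := Nat.cast_succ_choose_mul (R := ℚ) (n + k) k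
  have h1 := Nat.cast_add_choose_ne_zero (R := ℚ) (n + 1) k
  have h2 := Nat.cast_add_choose_ne_zero (R := ℚ) n k
  rw [add_right_comm] at h1
  push_cast at hden
  unfold binomRatio
  rw [add_right_comm, mul_div_assoc', mul_div_assoc', div_eq_div_iff h1 h2]
  linear_combination
    ((n + 1 + k : ℚ) * (n + k).choose k) * hnum - ((n + 1 : ℚ) * n.choose k) * hden

lemma sum_Icc_binomRatio_div_sq {j n : ℕ} (hj : 0 < j) (hjn : j ≤ n) :
    ∑ k ∈ Icc j n, binomRatio k j / (k : ℚ) ^ 2 = binomRatio n j / (j : ℚ) ^ 2 := by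
  induction n, hjn using Nat.le_induction with
  | base => simp
  | succ n hjn ih =>
    rw [sum_Icc_succ_top (by omega), ih]
    field_simp
    push_cast
    linear_combination -binomRatio_succ_left n j

lemma two_mul_sum_Icc_mul_binomRatio {j n : ℕ} (hjn : j ≤ n) :
    2 * ∑ k ∈ Icc j n, (k : ℚ) * binomRatio n k = (n + j) * binomRatio n j := by
  have step (k : ℕ) : 2 * ((k : ℚ) * binomRatio n k) =
      -((n + (k + 1 : ℕ)) * binomRatio n (k + 1)) - -((n + k) * binomRatio n k) := by
    push_cast
    linear_combination binomRatio_succ_right n k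
  have h := sum_Icc_sub (f := fun k : ℕ => -((n + k : ℚ) * binomRatio n k)) hjn
  beta_reduce at h
  rw [mul_sum, sum_congr rfl fun k _ => step k, h, binomRatio_of_lt (Nat.lt_succ_self n)]
  ring

lemma sum_Icc_binomRatio_div {j n : ℕ} (hj : 0 < j) (hjn : j ≤ n) :
    ∑ k ∈ Icc j n, binomRatio k j / k =
      binomRatio n j / j + 2 * ∑ k ∈ Icc (j + 1) n, binomRatio n k / k := by
  induction n, hjn using Nat.le_induction with
  | base => simp
  | succ n hjn ih =>
    have hdiff : ∑ k ∈ Icc (j + 1) n, binomRatio (n + 1) k / k -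
        ∑ k ∈ Icc (j + 1) n, binomRatio n k / k =
          (∑ k ∈ Icc (j + 1) n, (k : ℚ) * binomRatio (n + 1) k) / ((n : ℚ) + 1) ^ 2 := by
      rw [← sum_sub_distrib, sum_div]
      refine sum_congr rfl fun k hk => ?_
      have hk0 : (k : ℚ) ≠ 0 := Nat.cast_ne_zero.mpr (by simp only [mem_Icc] at hk; omega)
      field_simp
      linear_combination binomRatio_succ_left n k
    have hM := two_mul_sum_Icc_mul_binomRatio (show j + 1 ≤ n + 1 by omega)
    rw [sum_Icc_succ_top (by omega)] at hM
    have hR := binomRatio_succ_right (n + 1) j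
    have hL := binomRatio_succ_left n j
    rw [sum_Icc_succ_top (by omega), ih, sum_Icc_succ_top (by omega)]
    push_cast at hM hR ⊢
    -- both sides grow by `r(n+1,j)/(n+1)`: the new tail terms sum to `(n+1-j) r(n+1,j)/(n+1)²`
    linear_combination (norm := skip) -2 * hdiff - hM / ((n : ℚ) + 1) ^ 2
      - hR / ((n : ℚ) + 1) ^ 2 - hL / (j * ((n : ℚ) + 1) ^ 2)
    field_simp
    ring

lemma sum_Icc_neg_one_pow_mul_binomRatio {n : ℕ} (hn : 0 < n) :
    ∑ k ∈ Icc 1 n, (-1 : ℚ) ^ k * binomRatio n k = -1 / 2 := by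
  have step (k : ℕ) : 2 * n * ((-1 : ℚ) ^ k * binomRatio n k) =
      -(-1) ^ (k + 1) * (n + (k + 1 : ℕ)) * binomRatio n (k + 1) -
        -(-1) ^ k * (n + k) * binomRatio n k := by
    push_cast
    linear_combination -(-1 : ℚ) ^ k * binomRatio_succ_right n k
  have h := sum_Icc_sub (f := fun k : ℕ => -(-1 : ℚ) ^ k * (n + k) * binomRatio n k)
    (show 1 ≤ n from hn)
  beta_reduce at h
  rw [← sum_congr rfl fun k _ => step k, ← mul_sum, binomRatio_of_lt (Nat.lt_succ_self n)] at h
  have hr1 : ((n : ℚ) + 1) * binomRatio n 1 = n := by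
    simp only [binomRatio, Nat.choose_one_right]
    push_cast
    field_simp
  apply mul_left_cancel₀ (show (2 * n : ℚ) ≠ 0 by positivity)
  push_cast at h
  linear_combination h - hr1

lemma aSgn_of_pos {s : ℤ} (hs : 0 < s) : aSgn s = 1 := if_pos hs

lemma aSgn_of_nonpos {s : ℤ} (hs : s ≤ 0) : aSgn s = -1 := if_neg hs.not_gt

lemma Hstar_cons_of_pos {s : ℤ} (hs : 0 < s) (n : ℕ) (l : List ℤ) :
    Hstar n (s :: l) = ∑ k ∈ Icc 1 n, Hstar k l / (k : ℚ) ^ s.natAbs := by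
  simp only [Hstar, aSgn_of_pos hs, one_pow, one_div_mul_eq_div]

lemma Hh_cons_of_pos {s : ℤ} (hs : 0 < s) (m : ℕ) (l : List ℤ) :
    Hh m (s :: l) = ∑ j ∈ Icc 1 m, Hh (j - 1) l / (j : ℚ) ^ s.natAbs := by
  simp only [Hh, aSgn_of_pos hs, one_pow, one_div_mul_eq_div]

lemma Hh_singleton_neg (m s : ℕ) :
    Hh m [-(s : ℤ)] = ∑ j ∈ Icc 1 m, (-1 : ℚ) ^ j / (j : ℚ) ^ s := by
  simp [Hh, aSgn_of_nonpos (show -(s : ℤ) ≤ 0 by omega)]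

lemma sum_Icc_sum_Icc_comm {M : Type*} [AddCommMonoid M] (f : ℕ → ℕ → M) (n : ℕ) :
    ∑ k ∈ Icc 1 n, ∑ j ∈ Icc 1 k, f k j = ∑ j ∈ Icc 1 n, ∑ k ∈ Icc j n, f k j :=
  sum_comm' fun _ _ => by simp only [mem_Icc]; omega

lemma sum_Icc_sum_Icc_succ_comm {M : Type*} [AddCommMonoid M] (f : ℕ → ℕ → M) (n : ℕ) :
    ∑ j ∈ Icc 1 n, ∑ k ∈ Icc (j + 1) n, f j k =
      ∑ k ∈ Icc 1 n, ∑ j ∈ Icc 1 (k - 1), f j k :=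
  sum_comm' fun _ _ => by simp only [mem_Icc]; omega

-- Only `0 < n`: for the empty list `Hstar 0 [] = 1`, while the sum is empty.
def HasBinomRatioExpansion (l : List ℤ) (φ : ℕ → ℚ) : Prop :=
  ∀ n, 0 < n → Hstar n l = ∑ k ∈ Icc 1 n, φ k * binomRatio n k

namespace HasBinomRatioExpansion

variable {l : List ℤ} {φ : ℕ → ℚ}

lemma congr (h : HasBinomRatioExpansion l φ) {ψ : ℕ → ℚ}
    (hψ : ∀ k, 0 < k → φ k = ψ k) :
    HasBinomRatioExpansion l ψ := fun n hn =>
  (h n hn).trans <| sum_congr rfl fun k hk => by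
    rw [hψ k (by simp only [mem_Icc] at hk; omega)]

lemma nil : HasBinomRatioExpansion [] fun k => -2 * (-1) ^ k := fun n hn => by
  rw [Hstar, ← sum_congr rfl fun k _ => (mul_assoc (-2 : ℚ) _ _).symm, ← mul_sum,
    sum_Icc_neg_one_pow_mul_binomRatio hn]
  norm_num

lemma cons_two (h : HasBinomRatioExpansion l φ) :
    HasBinomRatioExpansion (2 :: l) fun k => φ k / (k : ℚ) ^ 2 := fun n hn => by
  calc Hstar n (2 :: l)
      = ∑ k ∈ Icc 1 n, ∑ j ∈ Icc 1 k, φ j * binomRatio k j / (k : ℚ) ^ 2 := by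
        rw [Hstar_cons_of_pos two_pos]
        refine sum_congr rfl fun k hk => ?_
        rw [h k (by simp only [mem_Icc] at hk; omega), sum_div]
        rfl
    _ = ∑ j ∈ Icc 1 n, φ j * ∑ k ∈ Icc j n, binomRatio k j / (k : ℚ) ^ 2 := by
        rw [sum_Icc_sum_Icc_comm]
        simp only [mul_sum, mul_div_assoc]
    _ = ∑ k ∈ Icc 1 n, φ k / (k : ℚ) ^ 2 * binomRatio n k := by
        refine sum_congr rfl fun j hj => ?_
        simp only [mem_Icc] at hj
        rw [sum_Icc_binomRatio_div_sq hj.1 hj.2]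
        ring

lemma replicate_two (h : HasBinomRatioExpansion l φ) (a : ℕ) :
    HasBinomRatioExpansion (List.replicate a 2 ++ l) fun k => φ k / (k : ℚ) ^ (2 * a) := by
  induction a with
  | zero => simpa using h
  | succ a ih =>
    refine ih.cons_two.congr fun k _ => ?_
    rw [div_div, ← pow_add]
    ring_nf

lemma cons_one (h : HasBinomRatioExpansion l φ) :
    HasBinomRatioExpansion (1 :: l) fun k => (φ k + 2 * ∑ j ∈ Icc 1 (k - 1), φ j) / k :=
  fun n hn => by
  calc Hstar n (1 :: l)
      = ∑ k ∈ Icc 1 n, ∑ j ∈ Icc 1 k, φ j * binomRatio k j / (k : ℚ) := by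
        rw [Hstar_cons_of_pos one_pos]
        refine sum_congr rfl fun k hk => ?_
        rw [h k (by simp only [mem_Icc] at hk; omega), sum_div]
        simp
    _ = ∑ j ∈ Icc 1 n, φ j * ∑ k ∈ Icc j n, binomRatio k j / (k : ℚ) := by
        rw [sum_Icc_sum_Icc_comm]
        simp only [mul_sum, mul_div_assoc]
    _ = ∑ j ∈ Icc 1 n, (φ j / j * binomRatio n j +
          2 * ∑ k ∈ Icc (j + 1) n, φ j * binomRatio n k / k) := by
        refine sum_congr rfl fun j hj => ?_
        simp only [mem_Icc] at hj
        rw [sum_Icc_binomRatio_div hj.1 hj.2, mul_add, mul_left_comm,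
          mul_sum (Icc (j + 1) n)]
        simp only [mul_div_assoc]
        ring
    _ = ∑ k ∈ Icc 1 n, (φ k + 2 * ∑ j ∈ Icc 1 (k - 1), φ j) / k * binomRatio n k := by
        rw [sum_add_distrib, ← mul_sum, sum_Icc_sum_Icc_succ_comm,
          mul_sum, ← sum_add_distrib]
        refine sum_congr rfl fun k _ => ?_
        rw [← sum_div, ← sum_mul]
        ring

end HasBinomRatioExpansion

lemma hasBinomRatioExpansion_one_replicate_two (c : ℕ) :
    HasBinomRatioExpansion (1 :: List.replicate c 2) fun k =>
      -2 * (-1) ^ k / (k : ℚ) ^ (2 * c + 1) - 4 * Hh (k - 1) [-(2 * (c : ℤ))] / k := by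
  have h := HasBinomRatioExpansion.nil.replicate_two c
  rw [List.append_nil] at h
  refine h.cons_one.congr fun k hk => ?_
  have hsum : ∑ j ∈ Icc 1 (k - 1), -2 * (-1 : ℚ) ^ j / (j : ℚ) ^ (2 * c) =
      -2 * Hh (k - 1) [-(2 * (c : ℤ))] := by
    rw [show -(2 * (c : ℤ)) = -((2 * c : ℕ) : ℤ) by push_cast; ring, Hh_singleton_neg,
      mul_sum]
    simp only [mul_div_assoc]
  rw [hsum]
  field_simp
  ring

lemma hasBinomRatioExpansion_one_replicate_two_one_replicate_two (b c : ℕ) :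
    HasBinomRatioExpansion (1 :: (List.replicate b 2 ++ 1 :: List.replicate c 2)) fun k =>
      -2 * (-1) ^ k / (k : ℚ) ^ (2 * b + 2 * c + 2)
        - 4 * Hh (k - 1) [-(2 * (c : ℤ))] / (k : ℚ) ^ (2 * b + 2)
        - 4 * Hh (k - 1) [-(2 * (b : ℤ) + 1 + 2 * (c : ℤ))] / k
        - 8 * Hh (k - 1) [2 * (b : ℤ) + 1, -(2 * (c : ℤ))] / k := by
  refine ((hasBinomRatioExpansion_one_replicate_two c).replicate_two b).cons_one.congr
    fun k hk => ?_
  have hsum : ∑ j ∈ Icc 1 (k - 1),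
      (-2 * (-1 : ℚ) ^ j / (j : ℚ) ^ (2 * c + 1) - 4 * Hh (j - 1) [-(2 * (c : ℤ))] / j)
        / (j : ℚ) ^ (2 * b) =
      -2 * Hh (k - 1) [-(2 * (b : ℤ) + 1 + 2 * (c : ℤ))]
        - 4 * Hh (k - 1) [2 * (b : ℤ) + 1, -(2 * (c : ℤ))] := by
    rw [show -(2 * (b : ℤ) + 1 + 2 * (c : ℤ)) = -((2 * b + 2 * c + 1 : ℕ) : ℤ) by
        push_cast; ring, Hh_singleton_neg, Hh_cons_of_pos (by positivity),
      show (2 * (b : ℤ) + 1).natAbs = 2 * b + 1 by omega, mul_sum, mul_sum, ← sum_sub_distrib]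
    refine sum_congr rfl fun j hj => ?_
    field_simp
    ring
  rw [hsum]
  field_simp
  ring

theorem stmt6_general (n a b c : ℕ) (hn : 1 ≤ n) :
    Hstar n (List.replicate a 2 ++ [1] ++ List.replicate b 2 ++ [1] ++ List.replicate c 2)
      = -2 * ∑ k ∈ Finset.Icc 1 n,
            (-1 : ℚ) ^ k * (n.choose k) / ((k : ℚ) ^ (2*(a+b+c)+2) * ((n+k).choose k))
        - 4 * ∑ k ∈ Finset.Icc 1 n,
            Hh (k-1) [-(2 * (c : ℤ))] * (n.choose k)
              / ((k : ℚ) ^ (2*a+2*b+2) * ((n+k).choose k))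
        - 4 * ∑ k ∈ Finset.Icc 1 n,
            Hh (k-1) [-(2 * (b : ℤ) + 1 + 2 * (c : ℤ))] * (n.choose k)
              / ((k : ℚ) ^ (2*a+1) * ((n+k).choose k))
        - 8 * ∑ k ∈ Finset.Icc 1 n,
            Hh (k-1) [2 * (b : ℤ) + 1, -(2 * (c : ℤ))] * (n.choose k)
              / ((k : ℚ) ^ (2*a+1) * ((n+k).choose k)) := by
  have hlist :
      List.replicate a 2 ++ [(1 : ℤ)] ++ List.replicate b 2 ++ [1] ++ List.replicate c 2 =
        List.replicate a 2 ++ 1 :: (List.replicate b 2 ++ 1 :: List.replicate c 2) := by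
    simp
  rw [hlist,
    (hasBinomRatioExpansion_one_replicate_two_one_replicate_two b c).replicate_two a n hn]
  simp only [mul_sum, ← sum_sub_distrib]
  refine sum_congr rfl fun k hk => ?_
  simp only [binomRatio]
  field_simp
  ring

theorem stmt6 (n a b c : ℕ) (hn : 1 ≤ n) (hc : 1 ≤ c) :
    Hstar n (List.replicate a 2 ++ [1] ++ List.replicate b 2 ++ [1] ++ List.replicate c 2)
      = -2 * ∑ k ∈ Finset.Icc 1 n,
            (-1 : ℚ) ^ k * (n.choose k) / ((k : ℚ) ^ (2*(a+b+c)+2) * ((n+k).choose k))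
        - 4 * ∑ k ∈ Finset.Icc 1 n,
            Hh (k-1) [-(2 * (c : ℤ))] * (n.choose k)
              / ((k : ℚ) ^ (2*a+2*b+2) * ((n+k).choose k))
        - 4 * ∑ k ∈ Finset.Icc 1 n,
            Hh (k-1) [-(2 * (b : ℤ) + 1 + 2 * (c : ℤ))] * (n.choose k)
              / ((k : ℚ) ^ (2*a+1) * ((n+k).choose k))
        - 8 * ∑ k ∈ Finset.Icc 1 n,
            Hh (k-1) [2 * (b : ℤ) + 1, -(2 * (c : ℤ))] * (n.choose k)
              / ((k : ℚ) ^ (2*a+1) * ((n+k).choose k)) :=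
  stmt6_general n a b c hn
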